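/- arXiv:1604.05294 — 2 statements merged into one kernel-verified Lean document; each statement's English description precedes it below -/
import Mathlib

section
/- The vector 𝐅 of completed fifth-order mock theta functions satisfies 𝐅(z+1) = M_T 𝐅(z) for all z in the upper half-plane ℍ. -/
noncomputable section

open MeasureTheory

/-- The finite q-Pochhammer symbol `(a; q)_n = ∏_{m=0}^{n-1} (1 - a q^m)`. -/
def qp (a q : ℂ) (n : ℕ) : ℂ := ∏ m ∈ Finset.range n, (1 - a * q ^ m)

/-- The infinite q-Pochhammer symbol `(a; q)_∞ = ∏_{m=0}^{∞} (1 - a q^m)`. -/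
def qpInf (a q : ℂ) : ℂ := ∏' m : ℕ, (1 - a * q ^ m)

/-- Ramanujan's fifth-order mock theta function `f₀`. -/
def mtf0 (q : ℂ) : ℂ := ∑' n : ℕ, q ^ (n ^ 2) / qp (-q) q n

/-- Ramanujan's fifth-order mock theta function `f₁`. -/
def mtf1 (q : ℂ) : ℂ := ∑' n : ℕ, q ^ (n * (n + 1)) / qp (-q) q n

/-- Ramanujan's fifth-order mock theta function `F₀`. -/
def mtF0 (q : ℂ) : ℂ := ∑' n : ℕ, q ^ (2 * n ^ 2) / qp q (q ^ 2) n

/-- Ramanujan's fifth-order mock theta function `F₁`. -/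
def mtF1 (q : ℂ) : ℂ := ∑' n : ℕ, q ^ (2 * n * (n + 1)) / qp q (q ^ 2) (n + 1)

/-- `M(a/5, q^k) = Σ_{n≥1} q^{k n(n-1)} / ((q^{ka/5}; q^k)_n (q^{k - ka/5}; q^k)_n)`
for `k` divisible by 5 (used with `a ∈ {1,2}` and `k ∈ {5,10}`). -/
def Mq (a k : ℕ) (q : ℂ) : ℂ :=
  ∑' n : ℕ, q ^ (k * (n + 1) * n) /
    (qp (q ^ (k * a / 5)) (q ^ k) (n + 1) * qp (q ^ (k - k * a / 5)) (q ^ k) (n + 1))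

/-- `θ₄(0,q) = (q;q)_∞² / (q²;q²)_∞`. -/
def theta4 (q : ℂ) : ℂ := qpInf q q ^ 2 / qpInf (q ^ 2) (q ^ 2)

/-- `ψ(q) = (q²;q²)_∞² / (q;q)_∞`. -/
def psiTheta (q : ℂ) : ℂ := qpInf (q ^ 2) (q ^ 2) ^ 2 / qpInf q q

/-- The Rogers–Ramanujan function `G(q)`. -/
def RRG (q : ℂ) : ℂ := 1 / (qpInf q (q ^ 5) * qpInf (q ^ 4) (q ^ 5))

/-- The Rogers–Ramanujan function `H(q)`. -/
def RRH (q : ℂ) : ℂ := 1 / (qpInf (q ^ 2) (q ^ 5) * qpInf (q ^ 3) (q ^ 5))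

/-- `q^r = e^{2πirz}` for rational `r`. -/
def eQ (r : ℚ) (z : ℂ) : ℂ := Complex.exp (2 * Real.pi * Complex.I * (r : ℂ) * z)

/-- `ζ_n = e^{2πi/n}`. -/
def zn (n : ℕ) : ℂ := Complex.exp (2 * Real.pi * Complex.I / (n : ℂ))

/-- The Dedekind eta function. -/
def eta (z : ℂ) : ℂ := eQ (1/24) z * ∏' n : ℕ, (1 - eQ 1 z ^ (n + 1))

/-- `g(z) = q^{-1/60} G(q)`. -/
def rrg (z : ℂ) : ℂ := eQ (-1/60) z * RRG (eQ 1 z)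

/-- `h(z) = q^{11/60} H(q)`. -/
def rrh (z : ℂ) : ℂ := eQ (11/60) z * RRH (eQ 1 z)

/-- The unary theta function `g_{a,b}(z) = Σ_{ν ∈ a+ℤ} ν e^{πiν²z + 2πiνb}`. -/
def gth (a b : ℝ) (z : ℂ) : ℂ :=
  ∑' n : ℤ, ((a : ℂ) + (n : ℂ)) *
    Complex.exp (Real.pi * Complex.I * ((a : ℂ) + (n : ℂ)) ^ 2 * z
      + 2 * Real.pi * Complex.I * ((a : ℂ) + (n : ℂ)) * (b : ℂ))

/-- The nonholomorphic integral
`R_{a,b}(z) = -i ∫_{-z̄}^{i∞} g_{a,-b}(τ) (-i(τ+z))^{-1/2} dτ`,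
parametrized along the vertical ray `τ = -z̄ + it`, `t ∈ (0,∞)`. -/
def RInt (a b : ℝ) (z : ℂ) : ℂ :=
  -Complex.I * ∫ t in Set.Ioi (0 : ℝ),
    (gth a (-b) (-(starRingEnd ℂ z) + t * Complex.I) /
      (-Complex.I * ((-(starRingEnd ℂ z) + t * Complex.I) + z)) ^ ((1 : ℂ)/2)) * Complex.I

/-- `M(a/5, z) = Σ_{n≥1} q^{n(n-1)} / ((q^{a/5};q)_n (q^{1-a/5};q)_n)` with `q = e^{2πiz}`. -/
def Mm (a : ℕ) (z : ℂ) : ℂ :=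
  ∑' n : ℕ, eQ 1 z ^ ((n + 1) * n) /
    (qp (eQ ((a : ℚ)/5) z) (eQ 1 z) (n + 1) * qp (eQ (1 - (a : ℚ)/5) z) (eQ 1 z) (n + 1))

/-- `N(a/5, z) = 1 + Σ_{n≥1} q^{n²} / ((ζ₅^a q;q)_n (ζ₅^{-a} q;q)_n)` with `q = e^{2πiz}`. -/
def Nn (a : ℕ) (z : ℂ) : ℂ :=
  1 + ∑' n : ℕ, eQ 1 z ^ ((n + 1) ^ 2) /
    (qp (zn 5 ^ a * eQ 1 z) (eQ 1 z) (n + 1) * qp ((zn 5)⁻¹ ^ a * eQ 1 z) (eQ 1 z) (n + 1))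

/-- The completed Appell–Lerch sum `M̃(a/5, z)`. -/
def Mtilde (a : ℕ) (z : ℂ) : ℂ :=
  2 * eQ (3 * (a : ℚ) / 10 * (1 - (a : ℚ)/5) - 1/24) z * Mm a z +
    zn 10 ^ a * ((zn 12)⁻¹ * RInt ((6 * (a : ℝ) - 5)/30) (1/2) (3 * z)
      + zn 12 * RInt ((6 * (a : ℝ) + 5)/30) (1/2) (3 * z))

/-- The completed mock theta function `f̃₀`. -/
def ftilde0 (z : ℂ) : ℂ :=
  eQ (-1/60) z * mtf0 (eQ 1 z) -
    zn 10 * ((zn 12)⁻¹ * RInt (1/30) (1/2) (30 * z) + zn 12 * RInt (11/30) (1/2) (30 * z))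

/-- The completed mock theta function `f̃₁`. -/
def ftilde1 (z : ℂ) : ℂ :=
  eQ (11/60) z * mtf1 (eQ 1 z) -
    zn 5 * ((zn 12)⁻¹ * RInt (7/30) (1/2) (30 * z) + zn 12 * RInt (17/30) (1/2) (30 * z))

/-- The completed mock theta function `F̃₀`. -/
def Ftilde0 (z : ℂ) : ℂ :=
  eQ (-1/120) z * (mtF0 (eQ 1 z) - 1) +
    (1/2) * zn 10 * ((zn 12)⁻¹ * RInt (1/30) (1/2) (15 * z) + zn 12 * RInt (11/30) (1/2) (15 * z))

/-- The completed mock theta function `F̃₁`. -/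
def Ftilde1 (z : ℂ) : ℂ :=
  eQ (71/120) z * mtF1 (eQ 1 z) +
    (1/2) * zn 5 * ((zn 12)⁻¹ * RInt (7/30) (1/2) (15 * z) + zn 12 * RInt (17/30) (1/2) (15 * z))

/-- `α = √((5-√5)/2)` (as a complex number). -/
def alphaC : ℂ := (Real.sqrt ((5 - Real.sqrt 5)/2) : ℝ)

/-- `β = √((5+√5)/2)` (as a complex number). -/
def betaC : ℂ := (Real.sqrt ((5 + Real.sqrt 5)/2) : ℝ)

/-- The vector `𝐅` of completed fifth-order mock theta functions. -/
def Fvec (z : ℂ) : Fin 6 → ℂ :=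
  ![ftilde0 z, ftilde1 z, Ftilde0 (z/2), Ftilde1 (z/2),
    zn 240 * Ftilde0 ((z + 1)/2), zn 240 ^ (-71 : ℤ) * Ftilde1 ((z + 1)/2)]

/-- The vector `𝐆` built from completed Appell–Lerch sums and eta-quotient multiples of the
Rogers–Ramanujan functions. -/
def Gvec (z : ℂ) : Fin 6 → ℂ :=
  ![-(Mtilde 1 (10 * z)) + eta (5 * z) ^ 2 / eta (10 * z) * rrg z,
    -(Mtilde 2 (10 * z)) + eta (5 * z) ^ 2 / eta (10 * z) * rrh z,
    (1/2) * Mtilde 1 (5 * z / 2) - eta (5 * z) ^ 2 / eta (5 * z / 2) * rrh z,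
    (1/2) * Mtilde 2 (5 * z / 2) + eta (5 * z) ^ 2 / eta (5 * z / 2) * rrg z,
    (1/2) * zn 240 * Mtilde 1 ((5 * z + 5)/2)
      - zn 48 ^ 25 * (eta (5 * z) ^ 2 / eta ((5 * z + 1)/2)) * rrh z,
    (1/2) * zn 240 ^ (-71 : ℤ) * Mtilde 2 ((5 * z + 5)/2)
      + zn 48 * (eta (5 * z) ^ 2 / eta ((5 * z + 1)/2)) * rrg z]

/-- The matrix `M_T`. -/
def MT : Matrix (Fin 6) (Fin 6) ℂ :=
  !![(zn 60)⁻¹, 0, 0, 0, 0, 0;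
     0, zn 60 ^ 11, 0, 0, 0, 0;
     0, 0, 0, 0, (zn 240)⁻¹, 0;
     0, 0, 0, 0, 0, zn 240 ^ 71;
     0, 0, (zn 240)⁻¹, 0, 0, 0;
     0, 0, 0, zn 240 ^ 71, 0, 0]

/-- The matrix `M_S`. -/
def MS : Matrix (Fin 6) (Fin 6) ℂ :=
  !![0, 0, alphaC, betaC, 0, 0;
     0, 0, betaC, -alphaC, 0, 0;
     alphaC/2, betaC/2, 0, 0, 0, 0;
     betaC/2, -alphaC/2, 0, 0, 0, 0;
     0, 0, 0, 0, betaC/(Real.sqrt 2 : ℂ), alphaC/(Real.sqrt 2 : ℂ);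
     0, 0, 0, 0, alphaC/(Real.sqrt 2 : ℂ), -betaC/(Real.sqrt 2 : ℂ)]

/-- The generalized eta function `η_{10,1}(z) = q^{23/60} ∏_{n≥1, n≡±1 (10)} (1-qⁿ)`. -/
def etaTen1 (z : ℂ) : ℂ :=
  eQ (23/60) z * ∏' n : ℕ, ((1 - eQ 1 z ^ (10 * n + 1)) * (1 - eQ 1 z ^ (10 * n + 9)))

/-- The generalized eta function `η_{10,3}(z) = q^{-13/60} ∏_{n≥1, n≡±3 (10)} (1-qⁿ)`. -/
def etaTen3 (z : ℂ) : ℂ :=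
  eQ (-13/60) z * ∏' n : ℕ, ((1 - eQ 1 z ^ (10 * n + 3)) * (1 - eQ 1 z ^ (10 * n + 7)))

/-- The right-hand side `R(z)` of Lemma 2. -/
def Rfun (z : ℂ) : ℂ :=
  2 * (eta (2 * z) ^ 2 / eta z) * (alphaC⁻¹ * rrg (10 * z) + betaC⁻¹ * rrh (10 * z)) -
    2 * (eta (50 * z) ^ 2 / eta (25 * z)) * (betaC * rrg (10 * z) - alphaC * rrh (10 * z))

/-- The sign `a_h`. -/
def ah (h : ℕ) : ℂ := if h < 30 then 1 else -1

/-- The sign `b_h`. -/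
def bh (h : ℕ) : ℂ :=
  if h % 60 = 1 ∨ h % 60 = 13 ∨ h % 60 = 47 ∨ h % 60 = 59 then 1 else -1

/-- The coefficient of `𝔢_h - 𝔢_{-h}` (for `0 < h < 60`) in the vector `𝓗`. -/
def coeffH (H : ℂ → Fin 6 → ℂ) (z : ℂ) (h : ℕ) : ℂ :=
  if (h % 10 = 1 ∨ h % 10 = 9) ∧ Nat.gcd h 60 = 1 then ah h * H z 2 + bh h * H z 4
  else if (h % 10 = 2 ∨ h % 10 = 8) ∧ Nat.gcd h 60 = 2 then -(H z 0)
  else if (h % 10 = 3 ∨ h % 10 = 7) ∧ Nat.gcd h 60 = 1 then ah h * H z 3 + bh h * H z 5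
  else if (h % 10 = 4 ∨ h % 10 = 6) ∧ Nat.gcd h 60 = 2 then -(H z 1)
  else 0

/-- The `𝔢_k`-component of the vector-valued function `𝓗` built from `H`. -/
def calH (H : ℂ → Fin 6 → ℂ) (z : ℂ) (k : ZMod 120) : ℂ :=
  ∑ h ∈ Finset.Ioo 0 60, coeffH H z h *
    ((if ((h : ℕ) : ZMod 120) = k then 1 else 0) - (if -((h : ℕ) : ZMod 120) = k then 1 else 0))

/-! Under `z ↦ z + 1` the `q`-series part `q^r h(q)` of each completed function picks up `e(r)`,
while `R_{m/30,1/2}(15 k z)` (with `m` odd) picks up `e(-m²k/120)`: the theta function `g_{m/30,b}`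
is, up to that constant, invariant under `τ ↦ τ + 15k`, and the shift commutes with the integral
because it is real. For each of `f̃₀, f̃₁, F̃₀, F̃₁` these phases agree modulo `1`. The remaining
entries of `M_T` come from `z ↦ z + 1` exchanging the arguments `z/2` and `(z+1)/2`. -/

lemma zn_zpow (N : ℕ) (j : ℤ) : zn N ^ j = Complex.exp (2 * Real.pi * Complex.I * j / N) := by
  rw [zn, ← Complex.exp_int_mul]
  ring_nf

lemma zn_zpow_congr {N : ℕ} (hN : N ≠ 0) {j j' : ℤ} (h : j ≡ j' [ZMOD N]) :
    zn N ^ j = zn N ^ j' := by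
  have hroot : IsPrimitiveRoot (zn N) N := Complex.isPrimitiveRoot_exp N hN
  have hdiff : zn N ^ (j - j') = 1 :=
    (hroot.zpow_eq_one_iff_dvd _).mpr (Int.ModEq.dvd h.symm)
  rw [← sub_add_cancel j j', zpow_add₀ (hroot.ne_zero hN), hdiff, one_mul]

lemma zn_pow_of_mul_eq {N d M : ℕ} (hd : d ≠ 0) (h : N * d = M) : zn M ^ d = zn N := by
  subst h
  rw [zn, zn, ← Complex.exp_nat_mul]
  congr 1
  push_cast
  field_simp

lemma eQ_add_one_of_mul_eq {N : ℕ} (hN : N ≠ 0) {r : ℚ} {j : ℤ} (hr : r * N = j) (z : ℂ) :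
    eQ r (z + 1) = zn N ^ j * eQ r z := by
  have hrC : (r : ℂ) = j / N := by
    rw [eq_div_iff (by exact_mod_cast hN)]
    exact_mod_cast hr
  rw [zn_zpow, eQ, eQ, ← Complex.exp_add, hrC]
  congr 1
  ring

lemma eQ_one_add_one (z : ℂ) : eQ 1 (z + 1) = eQ 1 z := by
  simpa [zn] using eQ_add_one_of_mul_eq one_ne_zero (r := 1) (j := 1) (by simp) z

section Theta

variable (a b : ℝ)

lemma gth_add (w : ℂ)
    (hw : ∀ n : ℤ, Complex.exp (Real.pi * Complex.I * ((a : ℂ) + n) ^ 2 * w) =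
      Complex.exp (Real.pi * Complex.I * (a : ℂ) ^ 2 * w)) (z : ℂ) :
    gth a b (z + w) = Complex.exp (Real.pi * Complex.I * (a : ℂ) ^ 2 * w) * gth a b z := by
  rw [gth, gth, ← tsum_mul_left]
  refine tsum_congr fun n => ?_
  rw [← hw n, mul_left_comm, ← Complex.exp_add]
  ring_nf

lemma RInt_add_ofReal (w : ℝ)
    (hw : ∀ n : ℤ, Complex.exp (Real.pi * Complex.I * ((a : ℂ) + n) ^ 2 * w) =
      Complex.exp (Real.pi * Complex.I * (a : ℂ) ^ 2 * w)) (z : ℂ) :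
    RInt a b (z + w) = Complex.exp (-(Real.pi * Complex.I * (a : ℂ) ^ 2 * w)) * RInt a b z := by
  have hw_neg : ∀ n : ℤ, Complex.exp (Real.pi * Complex.I * ((a : ℂ) + n) ^ 2 * (-w : ℝ)) =
      Complex.exp (Real.pi * Complex.I * (a : ℂ) ^ 2 * (-w : ℝ)) := fun n => by
    simpa [mul_neg, Complex.exp_neg] using congrArg (·⁻¹) (hw n)
  have hintegrand : ∀ t : ℝ,
      gth a (-b) (-(starRingEnd ℂ (z + w)) + t * Complex.I) /
          (-Complex.I * ((-(starRingEnd ℂ (z + w)) + t * Complex.I) + (z + w))) ^ ((1 : ℂ) / 2)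
        * Complex.I =
      Complex.exp (-(Real.pi * Complex.I * (a : ℂ) ^ 2 * w)) *
        (gth a (-b) (-(starRingEnd ℂ z) + t * Complex.I) /
          (-Complex.I * ((-(starRingEnd ℂ z) + t * Complex.I) + z)) ^ ((1 : ℂ) / 2)
        * Complex.I) := fun t => by
    have hshift : -(starRingEnd ℂ (z + w)) + t * Complex.I =
        (-(starRingEnd ℂ z) + t * Complex.I) + (-w : ℝ) := by
      simp only [map_add, Complex.conj_ofReal, Complex.ofReal_neg]
      ring
    rw [hshift, gth_add a (-b) _ hw_neg, Complex.ofReal_neg, mul_neg]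
    ring_nf
  rw [RInt, RInt]
  simp only [hintegrand, integral_const_mul]
  ring

end Theta

lemma exp_sq_mul_periodic_of_odd {N : ℕ} (hN : Odd N) {m : ℤ} (hm : Odd m) (k n : ℤ) :
    Complex.exp (Real.pi * Complex.I * ((m / (2 * N) : ℝ) + n : ℂ) ^ 2 * ((N * k : ℝ) : ℂ)) =
      Complex.exp (Real.pi * Complex.I * ((m / (2 * N) : ℝ) : ℂ) ^ 2 * ((N * k : ℝ) : ℂ)) := by
  have hN0 : (N : ℂ) ≠ 0 := by exact_mod_cast hN.pos.ne'
  -- the exponents differ by `π i k n (m + N n)`, and `n (m + N n)` is even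
  obtain ⟨j, hj⟩ : Even (k * n * (m + N * n)) := by
    rcases Int.even_or_odd n with hn | hn
    · exact (hn.mul_left k).mul_right _
    · exact (hm.add_odd ((Int.odd_coe_nat N).mpr hN |>.mul hn)).mul_left _
  have hjC : (k : ℂ) * n * (m + N * n) = j + j := by exact_mod_cast hj
  have ha : 2 * N * ((m : ℂ) / (2 * N)) = m := by field_simp
  rw [Complex.exp_eq_exp_iff_exists_int]
  refine ⟨j, ?_⟩
  push_cast
  linear_combination (Real.pi * Complex.I) * hjC + (Real.pi * Complex.I * k * n) * ha

lemma RInt_add_mul_of_odd {N : ℕ} (hN : Odd N) {m : ℤ} (hm : Odd m) (k : ℤ) {a : ℝ}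
    (ha : a = m / (2 * N)) (b : ℝ) (z : ℂ) :
    RInt a b (z + N * k) = zn (8 * N) ^ (-(m ^ 2 * k)) * RInt a b z := by
  subst ha
  have h := RInt_add_ofReal _ b _ (exp_sq_mul_periodic_of_odd hN hm k) z
  push_cast at h
  rw [h, zn_zpow]
  congr 2
  push_cast
  field_simp
  ring

lemma ftilde0_add_one (z : ℂ) : ftilde0 (z + 1) = zn 120 ^ (-2 : ℤ) * ftilde0 z := by
  have hz : (30 : ℂ) * (z + 1) = 30 * z + (15 : ℕ) * (2 : ℤ) := by push_cast; ring
  have hζ : zn 120 ^ (-242 : ℤ) = zn 120 ^ (-2 : ℤ) := zn_zpow_congr (by norm_num) (by decide)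
  rw [ftilde0, ftilde0, eQ_add_one_of_mul_eq (N := 120) (j := -2) (by norm_num) (by norm_num),
    eQ_one_add_one, hz, RInt_add_mul_of_odd (m := 1) (by decide) (by decide) 2 (by norm_num),
    RInt_add_mul_of_odd (m := 11) (by decide) (by decide) 2 (by norm_num)]
  norm_num only [Nat.reduceMul]
  rw [hζ]
  ring

lemma ftilde1_add_one (z : ℂ) : ftilde1 (z + 1) = zn 120 ^ (22 : ℤ) * ftilde1 z := by
  have hz : (30 : ℂ) * (z + 1) = 30 * z + (15 : ℕ) * (2 : ℤ) := by push_cast; ring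
  have hζ₇ : zn 120 ^ (-98 : ℤ) = zn 120 ^ (22 : ℤ) := zn_zpow_congr (by norm_num) (by decide)
  have hζ₁₇ : zn 120 ^ (-578 : ℤ) = zn 120 ^ (22 : ℤ) := zn_zpow_congr (by norm_num) (by decide)
  rw [ftilde1, ftilde1, eQ_add_one_of_mul_eq (N := 120) (j := 22) (by norm_num) (by norm_num),
    eQ_one_add_one, hz, RInt_add_mul_of_odd (m := 7) (by decide) (by decide) 2 (by norm_num),
    RInt_add_mul_of_odd (m := 17) (by decide) (by decide) 2 (by norm_num)]
  norm_num only [Nat.reduceMul]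
  rw [hζ₇, hζ₁₇]
  ring

lemma Ftilde0_add_one (z : ℂ) : Ftilde0 (z + 1) = zn 120 ^ (-1 : ℤ) * Ftilde0 z := by
  have hz : (15 : ℂ) * (z + 1) = 15 * z + (15 : ℕ) * (1 : ℤ) := by push_cast; ring
  have hζ : zn 120 ^ (-121 : ℤ) = zn 120 ^ (-1 : ℤ) := zn_zpow_congr (by norm_num) (by decide)
  rw [Ftilde0, Ftilde0, eQ_add_one_of_mul_eq (N := 120) (j := -1) (by norm_num) (by norm_num),
    eQ_one_add_one, hz, RInt_add_mul_of_odd (m := 1) (by decide) (by decide) 1 (by norm_num),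
    RInt_add_mul_of_odd (m := 11) (by decide) (by decide) 1 (by norm_num)]
  norm_num only [Nat.reduceMul]
  rw [hζ]
  ring

lemma Ftilde1_add_one (z : ℂ) : Ftilde1 (z + 1) = zn 120 ^ (71 : ℤ) * Ftilde1 z := by
  have hz : (15 : ℂ) * (z + 1) = 15 * z + (15 : ℕ) * (1 : ℤ) := by push_cast; ring
  have hζ₇ : zn 120 ^ (-49 : ℤ) = zn 120 ^ (71 : ℤ) := zn_zpow_congr (by norm_num) (by decide)
  have hζ₁₇ : zn 120 ^ (-289 : ℤ) = zn 120 ^ (71 : ℤ) := zn_zpow_congr (by norm_num) (by decide)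
  rw [Ftilde1, Ftilde1, eQ_add_one_of_mul_eq (N := 120) (j := 71) (by norm_num) (by norm_num),
    eQ_one_add_one, hz, RInt_add_mul_of_odd (m := 7) (by decide) (by decide) 1 (by norm_num),
    RInt_add_mul_of_odd (m := 17) (by decide) (by decide) 1 (by norm_num)]
  norm_num only [Nat.reduceMul]
  rw [hζ₇, hζ₁₇]
  ring

theorem stmt8 : ∀ z : ℂ, 0 < z.im → Fvec (z + 1) = MT.mulVec (Fvec z) := by
  intro z _
  have hζ : zn 240 ≠ 0 := Complex.exp_ne_zero _
  have h60 : zn 60 = zn 240 ^ 4 := (zn_pow_of_mul_eq (by norm_num) (by norm_num)).symm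
  have h120 : zn 120 = zn 240 ^ 2 := (zn_pow_of_mul_eq (by norm_num) (by norm_num)).symm
  have hz : (z + 1 + 1) / 2 = z / 2 + 1 := by ring
  ext i
  fin_cases i <;>
    simp only [Fvec, MT, Matrix.mulVec, dotProduct, Fin.sum_univ_six, Matrix.of_apply,
      Matrix.cons_val', Matrix.cons_val_fin_one, Matrix.cons_val_zero, Matrix.cons_val_one,
      Matrix.cons_val, Fin.isValue, Fin.zero_eta, Fin.mk_one, Fin.reduceFinMk, zero_mul, zero_add,
      add_zero, hz, ftilde0_add_one, ftilde1_add_one, Ftilde0_add_one, Ftilde1_add_one, h60, h120,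
      zpow_neg, zpow_ofNat, Int.reduceNeg, ← pow_mul, Nat.reduceMul, pow_one] <;>
    field_simp
end
end

section
/- The vector 𝐆 built from the completed Appell–Lerch sums M̃ and eta-quotient multiples of the Rogers–Ramanujan functions satisfies 𝐆(z+1) = M_T 𝐆(z) for all z in the upper half-plane ℍ. -/
noncomputable section

open MeasureTheory

/-! Each component of `𝐆` picks up a root of unity under `z ↦ z + 1` (write `e(r) = eQ r 1`).
For the `q`-series and the eta quotients this is `q^r ↦ e(r) q^r` and `η(z + n) = e(n/24) η(z)`.
For the non-holomorphic part of `M̃(a/5, ·)` it is `g_{m/30,b}(τ - 15) = e(-m²/120) g_{m/30,b}(τ)`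
for odd `m`. The factors for `m = 6a - 5`, for `m = 6a + 5` and for the power of `q` in front of
`M(a/5, ·)` agree modulo `1`, so `M̃(a/5, ·)` itself is multiplied by a root of unity under
`w ↦ w + 5`. Collecting these roots of unity component by component gives `M_T`. -/

lemma eQ_add_left (r s : ℚ) (z : ℂ) : eQ (r + s) z = eQ r z * eQ s z := by
  rw [eQ, eQ, eQ, ← Complex.exp_add]
  congr 1
  push_cast
  ring

lemma eQ_add_right (r : ℚ) (z w : ℂ) : eQ r (z + w) = eQ r z * eQ r w := by
  rw [eQ, eQ, eQ, ← Complex.exp_add]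
  congr 1
  ring

@[simp]
lemma eQ_zero_left (z : ℂ) : eQ 0 z = 1 := by
  simp [eQ]

lemma eQ_neg (r : ℚ) (z : ℂ) : eQ (-r) z = (eQ r z)⁻¹ := by
  rw [eQ, eQ, ← Complex.exp_neg]
  congr 1
  push_cast
  ring

lemma eQ_sub (r s : ℚ) (z : ℂ) : eQ (r - s) z = eQ r z / eQ s z := by
  rw [sub_eq_add_neg, eQ_add_left, eQ_neg, div_eq_mul_inv]

lemma eQ_natCast_mul (n : ℕ) (r : ℚ) (z : ℂ) : eQ (n * r) z = eQ r z ^ n := by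
  rw [eQ, eQ, ← Complex.exp_nat_mul]
  congr 1
  push_cast
  ring

lemma eQ_intCast_mul (n : ℤ) (r : ℚ) (z : ℂ) : eQ (n * r) z = eQ r z ^ n := by
  rw [eQ, eQ, ← Complex.exp_int_mul]
  congr 1
  push_cast
  ring

lemma eQ_natCast (r : ℚ) (n : ℕ) : eQ r n = eQ (n * r) 1 := by
  rw [eQ, eQ]
  congr 1
  push_cast
  ring

lemma eQ_intCast_one (k : ℤ) : eQ k 1 = 1 := by
  rw [eQ]
  convert Complex.exp_int_mul_two_pi_mul_I k using 2
  push_cast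
  ring

lemma eQ_one_congr {r s : ℚ} (k : ℤ) (h : r = s + k) : eQ r 1 = eQ s 1 := by
  rw [h, eQ_add_left, eQ_intCast_one, mul_one]

lemma eQ_add_natCast_of_mul_eq (r : ℚ) (z : ℂ) (n : ℕ) (k : ℤ) (h : n * r = k) :
    eQ r (z + n) = eQ r z := by
  rw [eQ_add_right, eQ_natCast, h, eQ_intCast_one, mul_one]

lemma zn_eq (n : ℕ) : zn n = eQ (1 / n) 1 := by
  rw [zn, eQ]
  congr 1
  push_cast
  ring

lemma eta_add_natCast (z : ℂ) (n : ℕ) : eta (z + n) = eQ (n / 24) 1 * eta z := by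
  rw [eta, eta, eQ_add_natCast_of_mul_eq 1 z n n (by simp), eQ_add_right, eQ_natCast, mul_one_div]
  ring

lemma eta_sq_div_eta_add_natCast (z w : ℂ) (m n : ℕ) :
    eta (z + m) ^ 2 / eta (w + n) = eQ ((2 * m - n) / 24) 1 * (eta z ^ 2 / eta w) := by
  rw [eta_add_natCast, eta_add_natCast, mul_pow, ← eQ_natCast_mul, mul_div_mul_comm, ← eQ_sub]
  congr 3
  push_cast
  ring

lemma eta_sq_div_eta_ten_add_one (z : ℂ) :
    eta (5 * (z + 1)) ^ 2 / eta (10 * (z + 1)) = eta (5 * z) ^ 2 / eta (10 * z) := by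
  have h := eta_sq_div_eta_add_natCast (5 * z) (10 * z) 5 10
  norm_num at h
  rw [mul_add, mul_add, mul_one, mul_one, h]

lemma eta_sq_div_eta_five_half_add_one (z : ℂ) :
    eta (5 * (z + 1)) ^ 2 / eta (5 * (z + 1) / 2) =
      eQ (1 / 3) 1 * (eta (5 * z) ^ 2 / eta ((5 * z + 1) / 2)) := by
  have h := eta_sq_div_eta_add_natCast (5 * z) ((5 * z + 1) / 2) 5 2
  norm_num at h
  rw [show 5 * (z + 1) / 2 = (5 * z + 1) / 2 + 2 by ring, mul_add, mul_one, h]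

lemma eta_sq_div_eta_five_add_one_half_add_one (z : ℂ) :
    eta (5 * (z + 1)) ^ 2 / eta ((5 * (z + 1) + 1) / 2) =
      eQ (7 / 24) 1 * (eta (5 * z) ^ 2 / eta (5 * z / 2)) := by
  have h := eta_sq_div_eta_add_natCast (5 * z) (5 * z / 2) 5 3
  norm_num at h
  rw [show (5 * (z + 1) + 1) / 2 = 5 * z / 2 + 3 by ring, mul_add, mul_one, h]

lemma rrg_add_one (z : ℂ) : rrg (z + 1) = eQ (-1 / 60) 1 * rrg z := by
  have hq : eQ 1 (z + 1) = eQ 1 z := by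
    exact_mod_cast eQ_add_natCast_of_mul_eq 1 z 1 1 (by simp)
  rw [rrg, rrg, hq, eQ_add_right]
  ring

lemma rrh_add_one (z : ℂ) : rrh (z + 1) = eQ (11 / 60) 1 * rrh z := by
  have hq : eQ 1 (z + 1) = eQ 1 z := by
    exact_mod_cast eQ_add_natCast_of_mul_eq 1 z 1 1 (by simp)
  rw [rrh, rrh, hq, eQ_add_right]
  ring

lemma Mm_add_five (a : ℕ) (z : ℂ) : Mm a (z + 5) = Mm a z := by
  have h5 (r : ℚ) (k : ℤ) (h : 5 * r = k) : eQ r (z + 5) = eQ r z := by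
    exact_mod_cast eQ_add_natCast_of_mul_eq r z 5 k (by exact_mod_cast h)
  rw [Mm, Mm, h5 1 5 (by norm_num), h5 (a / 5) a (by push_cast; ring),
    h5 (1 - a / 5) (5 - a) (by push_cast; ring)]

lemma gth_sub_fifteen (m : ℤ) (hm : Odd m) (b : ℝ) (τ : ℂ) :
    gth (m / 30) b (τ - 15) = eQ (-(m ^ 2 / 120)) 1 * gth (m / 30) b τ := by
  rw [gth, gth, ← tsum_mul_left]
  refine tsum_congr fun n => ?_
  -- `15 (m/30 + n)² = m²/60 + (m n + 15 n²)`, and the second summand is even.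
  obtain ⟨j, hj⟩ : Even (m * n + 15 * n ^ 2) := by
    have h15 : ¬ Even (15 : ℤ) := by decide
    have hm' := Int.not_even_iff_odd.2 hm
    simp only [Int.even_add, Int.even_mul, Int.even_pow]
    tauto
  have hj' : (m : ℂ) * n + 15 * (n : ℂ) ^ 2 = j + j := by exact_mod_cast hj
  rw [eQ, mul_left_comm, ← Complex.exp_add]
  congr 1
  refine Complex.exp_eq_exp_iff_exists_int.2 ⟨-j, ?_⟩
  push_cast
  linear_combination (-(Real.pi : ℂ) * Complex.I) * hj'

lemma RInt_add_fifteen (m : ℤ) (hm : Odd m) (b : ℝ) (z : ℂ) :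
    RInt (m / 30) b (z + 15) = eQ (-(m ^ 2 / 120)) 1 * RInt (m / 30) b z := by
  have hconj : starRingEnd ℂ (z + 15) = starRingEnd ℂ z + 15 := by rw [map_add, map_ofNat]
  have hτ (t : ℝ) : -(starRingEnd ℂ z + 15) + t * Complex.I =
      (-(starRingEnd ℂ z) + t * Complex.I) - 15 := by ring
  have hsum (t : ℝ) : -(starRingEnd ℂ z) + t * Complex.I - 15 + (z + 15) =
      -(starRingEnd ℂ z) + t * Complex.I + z := by ring
  simp only [RInt, hconj, hτ, hsum, gth_sub_fifteen m hm, mul_div_assoc, mul_assoc,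
    MeasureTheory.integral_const_mul]
  ring

lemma Mtilde_add_five (a : ℕ) (w : ℂ) :
    Mtilde a (w + 5) = eQ (-((6 * a - 5) ^ 2 / 120)) 1 * Mtilde a w := by
  have hq (r : ℚ) : eQ r (w + 5) = eQ r w * eQ (5 * r) 1 := by
    rw [eQ_add_right]
    exact_mod_cast congrArg (eQ r w * ·) (eQ_natCast r 5)
  have hR (m : ℤ) (hm : Odd m) (hma : m = 6 * a - 5 ∨ m = 6 * a + 5) :
      RInt (m / 30) (1 / 2) (3 * (w + 5)) =
        eQ (-((6 * a - 5) ^ 2 / 120)) 1 * RInt (m / 30) (1 / 2) (3 * w) := by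
    rw [show 3 * (w + 5) = 3 * w + 15 by ring, RInt_add_fifteen m hm]
    rcases hma with rfl | rfl
    · push_cast; rfl
    · exact congrArg (· * _) (eQ_one_congr (-a) (by push_cast; ring))
  have h₁ := hR (6 * a - 5) ⟨3 * a - 3, by ring⟩ (.inl rfl)
  have h₂ := hR (6 * a + 5) ⟨3 * a + 2, by ring⟩ (.inr rfl)
  push_cast at h₁ h₂
  rw [Mtilde, Mtilde, Mm_add_five, hq, h₁, h₂,
    eQ_one_congr (r := 5 * _) (s := -((6 * a - 5) ^ 2 / 120)) a (by push_cast; ring)]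
  ring

lemma Mtilde_add_ten (a : ℕ) (w : ℂ) :
    Mtilde a (w + 10) = eQ (-((6 * a - 5) ^ 2 / 60)) 1 * Mtilde a w := by
  rw [show w + 10 = w + 5 + 5 by ring, Mtilde_add_five, Mtilde_add_five, ← mul_assoc,
    ← eQ_add_left]
  congr 2
  ring

lemma MT_mulVec (v : Fin 6 → ℂ) :
    MT.mulVec v = ![(zn 60)⁻¹ * v 0, zn 60 ^ 11 * v 1, (zn 240)⁻¹ * v 4, zn 240 ^ 71 * v 5,
      (zn 240)⁻¹ * v 2, zn 240 ^ 71 * v 3] := by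
  ext i
  fin_cases i <;> simp [Matrix.mulVec, dotProduct, Fin.sum_univ_six, MT]

lemma Gvec_add_one_zero (z : ℂ) : Gvec (z + 1) 0 = (zn 60)⁻¹ * Gvec z 0 := by
  simp only [Gvec, Matrix.cons_val]
  rw [eta_sq_div_eta_ten_add_one, mul_add, mul_one, Mtilde_add_ten, rrg_add_one, zn_eq, ← eQ_neg]
  norm_num
  ring

lemma Gvec_add_one_one (z : ℂ) : Gvec (z + 1) 1 = zn 60 ^ 11 * Gvec z 1 := by
  simp only [Gvec, Matrix.cons_val]
  rw [eta_sq_div_eta_ten_add_one, mul_add, mul_one, Mtilde_add_ten, rrh_add_one, zn_eq,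
    ← eQ_natCast_mul]
  norm_num
  rw [eQ_one_congr (s := 11 / 60) (-1) (by norm_num)]
  ring

lemma Gvec_add_one_two (z : ℂ) : Gvec (z + 1) 2 = (zn 240)⁻¹ * Gvec z 4 := by
  simp only [Gvec, Matrix.cons_val]
  rw [eta_sq_div_eta_five_half_add_one, rrh_add_one,
    show 5 * (z + 1) / 2 = (5 * z + 5) / 2 by ring]
  simp only [zn_eq, ← eQ_neg, ← eQ_natCast_mul]
  norm_num
  have h₁ : eQ (-(1 / 240)) 1 * eQ (1 / 240) 1 = 1 := by rw [← eQ_add_left]; norm_num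
  have h₂ : eQ (1 / 3) 1 * eQ (11 / 60) 1 = eQ (-(1 / 240)) 1 * eQ (25 / 48) 1 := by
    rw [← eQ_add_left, ← eQ_add_left]; exact eQ_one_congr 0 (by norm_num)
  linear_combination (-(1 / 2) * Mtilde 1 ((5 * z + 5) / 2)) * h₁ -
    (eta (5 * z) ^ 2 / eta ((5 * z + 1) / 2) * rrh z) * h₂

lemma Gvec_add_one_three (z : ℂ) : Gvec (z + 1) 3 = zn 240 ^ 71 * Gvec z 5 := by
  simp only [Gvec, Matrix.cons_val]
  rw [eta_sq_div_eta_five_half_add_one, rrg_add_one,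
    show 5 * (z + 1) / 2 = (5 * z + 5) / 2 by ring]
  simp only [zn_eq, ← eQ_natCast_mul, ← eQ_intCast_mul]
  norm_num
  have h₁ : eQ (71 / 240) 1 * eQ (-(71 / 240)) 1 = 1 := by rw [← eQ_add_left]; norm_num
  have h₂ : eQ (1 / 3) 1 * eQ (-(1 / 60)) 1 = eQ (71 / 240) 1 * eQ (1 / 48) 1 := by
    rw [← eQ_add_left, ← eQ_add_left]; exact eQ_one_congr 0 (by norm_num)
  linear_combination (-(1 / 2) * Mtilde 2 ((5 * z + 5) / 2)) * h₁ +
    (eta (5 * z) ^ 2 / eta ((5 * z + 1) / 2) * rrg z) * h₂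

lemma Gvec_add_one_four (z : ℂ) : Gvec (z + 1) 4 = (zn 240)⁻¹ * Gvec z 2 := by
  simp only [Gvec, Matrix.cons_val]
  rw [eta_sq_div_eta_five_add_one_half_add_one, rrh_add_one,
    show (5 * (z + 1) + 5) / 2 = 5 * z / 2 + 5 by ring, Mtilde_add_five]
  simp only [zn_eq, ← eQ_neg, ← eQ_natCast_mul]
  norm_num
  have h₁ : eQ (1 / 240) 1 * eQ (-(1 / 120)) 1 = eQ (-(1 / 240)) 1 := by
    rw [← eQ_add_left]; exact eQ_one_congr 0 (by norm_num)
  have h₂ : eQ (25 / 48) 1 * eQ (7 / 24) 1 * eQ (11 / 60) 1 = eQ (-(1 / 240)) 1 := by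
    rw [← eQ_add_left, ← eQ_add_left]; exact eQ_one_congr 1 (by norm_num)
  linear_combination (1 / 2 * Mtilde 1 (5 * z / 2)) * h₁ -
    (eta (5 * z) ^ 2 / eta (5 * z / 2) * rrh z) * h₂

lemma Gvec_add_one_five (z : ℂ) : Gvec (z + 1) 5 = zn 240 ^ 71 * Gvec z 3 := by
  simp only [Gvec, Matrix.cons_val]
  rw [eta_sq_div_eta_five_add_one_half_add_one, rrg_add_one,
    show (5 * (z + 1) + 5) / 2 = 5 * z / 2 + 5 by ring, Mtilde_add_five]
  simp only [zn_eq, ← eQ_natCast_mul, ← eQ_intCast_mul]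
  norm_num
  have h₁ : eQ (-(71 / 240)) 1 * eQ (-(49 / 120)) 1 = eQ (71 / 240) 1 := by
    rw [← eQ_add_left]; exact eQ_one_congr (-1) (by norm_num)
  have h₂ : eQ (1 / 48) 1 * eQ (7 / 24) 1 * eQ (-(1 / 60)) 1 = eQ (71 / 240) 1 := by
    rw [← eQ_add_left, ← eQ_add_left]; exact eQ_one_congr 0 (by norm_num)
  linear_combination (1 / 2 * Mtilde 2 (5 * z / 2)) * h₁ +
    (eta (5 * z) ^ 2 / eta (5 * z / 2) * rrg z) * h₂

theorem stmt10 : ∀ z : ℂ, 0 < z.im → Gvec (z + 1) = MT.mulVec (Gvec z) := by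
  intro z _
  rw [MT_mulVec]
  ext i
  fin_cases i
  exacts [Gvec_add_one_zero z, Gvec_add_one_one z, Gvec_add_one_two z, Gvec_add_one_three z,
    Gvec_add_one_four z, Gvec_add_one_five z]
end
end
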